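/- arXiv:2007.05017 — 5 statements merged into one kernel-verified Lean document; each statement's English description precedes it below -/
import Mathlib

section
/- Let f(x) = xᵀAx be a positive definite ternary quadratic form where A is a symmetric 3×3 integer matrix, and assume f is primitive (the gcd of the coefficients of f as an integral quadratic form equals 1). Let Λ = {x ∈ ℤ³ : f(x) ≡ 0 (mod 2)}, a finite-index subgroup of ℤ³; let (v₁,v₂,v₃) be any ℤ-basis of Λ, and let k be the positive generator of the ideal of ℤ generated by {f(x) : x ∈ Λ} (one has k ∈ {2,4}). Define g(y₁,y₂,y₃) = f(y₁v₁+y₂v₂+y₃v₃)/k. Then f is even-regular if and only if g is regular. -/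
/-- Value of the integral ternary quadratic form `x ↦ xᵀAx` over `ℤ`. -/
def fInt (A : Matrix (Fin 3) (Fin 3) ℤ) (x : Fin 3 → ℤ) : ℤ :=
  dotProduct x (A.mulVec x)

/-- Value of the ternary quadratic form `x ↦ xᵀAx` over `ℤ_p`. -/
noncomputable def fPadic (p : ℕ) [Fact p.Prime] (A : Matrix (Fin 3) (Fin 3) ℤ) (x : Fin 3 → ℤ_[p]) : ℤ_[p] :=
  dotProduct x ((A.map (Int.cast : ℤ → ℤ_[p])).mulVec x)

/-- `f` is even-regular: every even positive integer represented by `f` over every `ℤ_p`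
is represented by `f` over `ℤ`. -/
def EvenRegularF (A : Matrix (Fin 3) (Fin 3) ℤ) : Prop :=
  ∀ n : ℤ, 0 < n → Even n →
    (∀ (p : ℕ) (hp : p.Prime),
      letI : Fact p.Prime := ⟨hp⟩
      ∃ x : Fin 3 → ℤ_[p], fPadic p A x = (n : ℤ_[p])) →
    ∃ x : Fin 3 → ℤ, fInt A x = n

/-- The form `g(y) = f(y₁v₁ + y₂v₂ + y₃v₃)/k` is regular: every positive integer `n`
represented by `g` over every `ℤ_p` (equivalently, `k·n` is represented by `f` on the
`ℤ_p`-span of the `vᵢ`) is represented by `g` over `ℤ`. -/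
def RegularG (A : Matrix (Fin 3) (Fin 3) ℤ) (v : Fin 3 → Fin 3 → ℤ) (k : ℤ) : Prop :=
  ∀ n : ℤ, 0 < n →
    (∀ (p : ℕ) (hp : p.Prime),
      letI : Fact p.Prime := ⟨hp⟩
      ∃ y : Fin 3 → ℤ_[p],
        fPadic p A (fun j => ∑ i, y i * ((v i j : ℤ) : ℤ_[p])) = (k : ℤ_[p]) * (n : ℤ_[p])) →
    ∃ y : Fin 3 → ℤ, fInt A (fun j => ∑ i, y i * v i j) = k * n

lemma fPadic_intCast (p : ℕ) [Fact p.Prime] (A : Matrix (Fin 3) (Fin 3) ℤ) (x : Fin 3 → ℤ) :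
    fPadic p A (fun i => ((x i : ℤ) : ℤ_[p])) = ((fInt A x : ℤ) : ℤ_[p]) := by
  simp only [fPadic, fInt, dotProduct, Matrix.mulVec, Matrix.map_apply, Fin.sum_univ_three]
  push_cast
  ring

lemma padic_int_dvd {p : ℕ} [hp : Fact p.Prime] {n : ℤ} (h : ((p : ℕ) : ℤ_[p]) ∣ (n : ℤ_[p])) :
    (p : ℤ) ∣ n := by
  rw [← PadicInt.norm_int_lt_one_iff_dvd]
  exact (PadicInt.norm_lt_one_iff_dvd _).mpr h

lemma two_dvd_of_padic {n : ℤ} (h : (2 : ℤ_[2]) ∣ (n : ℤ_[2])) : (2 : ℤ) ∣ n := by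
  have : ((2 : ℕ) : ℤ_[2]) ∣ (n : ℤ_[2]) := by exact_mod_cast h
  exact_mod_cast padic_int_dvd this

lemma four_dvd_of_padic {n : ℤ} (h : (4 : ℤ_[2]) ∣ (n : ℤ_[2])) : (4 : ℤ) ∣ n := by
  have h2 : (2 : ℤ) ∣ n := two_dvd_of_padic (dvd_trans ⟨2, by norm_num⟩ h)
  obtain ⟨m, rfl⟩ := h2
  have h4 : (2 : ℤ_[2]) * 2 ∣ 2 * (m : ℤ_[2]) := by
    push_cast at h ⊢
    convert h using 1 <;> ring
  have hm : (2 : ℤ_[2]) ∣ (m : ℤ_[2]) := (mul_dvd_mul_iff_left (two_ne_zero)).mp h4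
  obtain ⟨m', rfl⟩ := two_dvd_of_padic hm
  exact ⟨m', by ring⟩

lemma gcd_step {k a c : ℤ} (h1 : k ∣ 4 * a) (h2 : k ∣ 4 * c) :
    k ∣ 4 * (Int.gcd a c : ℤ) := by
  have h := Int.dvd_coe_gcd h1 h2
  rw [Int.gcd_mul_left] at h
  simpa using h

lemma decomp (p : ℕ) [Fact p.Prime] (A : Matrix (Fin 3) (Fin 3) ℤ) (hA : A.IsSymm)
    (x' : Fin 3 → ℤ) (z : Fin 3 → ℤ_[p]) :
    ∃ C : ℤ_[p], fPadic p A (fun i => ((x' i : ℤ) : ℤ_[p]) + 2 * z i)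
      = ((fInt A x' : ℤ) : ℤ_[p]) + 4 * C := by
  have hs : ∀ i j, A j i = A i j := fun i j => congrFun (congrFun hA i) j
  refine ⟨(∑ i, ∑ j, ((x' i : ℤ) : ℤ_[p]) * ((A i j : ℤ) : ℤ_[p]) * z j)
    + (∑ i, ∑ j, z i * ((A i j : ℤ) : ℤ_[p]) * z j), ?_⟩
  simp only [fPadic, fInt, dotProduct, Matrix.mulVec, Matrix.map_apply, Fin.sum_univ_three]
  push_cast
  rw [hs 0 1, hs 0 2, hs 1 2]
  ring

theorem stmt3 (A : Matrix (Fin 3) (Fin 3) ℤ) (hA : A.IsSymm)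
    (hpos : ∀ x : Fin 3 → ℚ, x ≠ 0 →
      0 < dotProduct x ((A.map (Int.cast : ℤ → ℚ)).mulVec x))
    (hprim : Int.gcd (A 0 0) (Int.gcd (A 1 1) (Int.gcd (A 2 2)
      (Int.gcd (2 * A 0 1) (Int.gcd (2 * A 0 2) (2 * A 1 2))))) = 1)
    (v : Fin 3 → Fin 3 → ℤ)
    (hvmem : ∀ i, 2 ∣ fInt A (v i))
    (hbasis : ∀ w : Fin 3 → ℤ, 2 ∣ fInt A w →
      ∃! c : Fin 3 → ℤ, (fun j => ∑ i, c i * v i j) = w)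
    (k : ℤ) (hk : 0 < k)
    (hkdvd : ∀ x : Fin 3 → ℤ, 2 ∣ fInt A x → k ∣ fInt A x)
    (hkgen : ∀ m : ℤ, (∀ x : Fin 3 → ℤ, 2 ∣ fInt A x → m ∣ fInt A x) → m ∣ k) :
    EvenRegularF A ↔ RegularG A v k := by
  have hs : ∀ i j, A j i = A i j := fun i j => congrFun (congrFun hA i) j
  -- 2 ∣ k
  have h2k : (2 : ℤ) ∣ k := hkgen 2 (fun x hx => hx)
  -- values of fInt on the doubled standard vectors
  have hf1 : fInt A ![2,0,0] = 4 * A 0 0 := by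
    simp [fInt, dotProduct, Matrix.mulVec, Fin.sum_univ_three]; ring
  have hf2 : fInt A ![0,2,0] = 4 * A 1 1 := by
    simp [fInt, dotProduct, Matrix.mulVec, Fin.sum_univ_three]; ring
  have hf3 : fInt A ![0,0,2] = 4 * A 2 2 := by
    simp [fInt, dotProduct, Matrix.mulVec, Fin.sum_univ_three]; ring
  have hf12 : fInt A ![2,2,0] = 4 * A 0 0 + 4 * A 1 1 + 4 * (2 * A 0 1) := by
    simp [fInt, dotProduct, Matrix.mulVec, Fin.sum_univ_three]
    rw [hs 0 1]; ring
  have hf13 : fInt A ![2,0,2] = 4 * A 0 0 + 4 * A 2 2 + 4 * (2 * A 0 2) := by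
    simp [fInt, dotProduct, Matrix.mulVec, Fin.sum_univ_three]
    rw [hs 0 2]; ring
  have hf23 : fInt A ![0,2,2] = 4 * A 1 1 + 4 * A 2 2 + 4 * (2 * A 1 2) := by
    simp [fInt, dotProduct, Matrix.mulVec, Fin.sum_univ_three]
    rw [hs 1 2]; ring
  have he1 : 2 ∣ fInt A ![2,0,0] := by rw [hf1]; exact ⟨2 * A 0 0, by ring⟩
  have he2 : 2 ∣ fInt A ![0,2,0] := by rw [hf2]; exact ⟨2 * A 1 1, by ring⟩
  have he3 : 2 ∣ fInt A ![0,0,2] := by rw [hf3]; exact ⟨2 * A 2 2, by ring⟩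
  have d1 : k ∣ 4 * A 0 0 := hf1 ▸ hkdvd _ he1
  have d2 : k ∣ 4 * A 1 1 := hf2 ▸ hkdvd _ he2
  have d3 : k ∣ 4 * A 2 2 := hf3 ▸ hkdvd _ he3
  have d12 : k ∣ 4 * A 0 0 + 4 * A 1 1 + 4 * (2 * A 0 1) :=
    hf12 ▸ hkdvd _ (by rw [hf12]; exact ⟨2*A 0 0 + 2*A 1 1 + 2*(2*A 0 1), by ring⟩)
  have d13 : k ∣ 4 * A 0 0 + 4 * A 2 2 + 4 * (2 * A 0 2) :=
    hf13 ▸ hkdvd _ (by rw [hf13]; exact ⟨2*A 0 0 + 2*A 2 2 + 2*(2*A 0 2), by ring⟩)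
  have d23 : k ∣ 4 * A 1 1 + 4 * A 2 2 + 4 * (2 * A 1 2) :=
    hf23 ▸ hkdvd _ (by rw [hf23]; exact ⟨2*A 1 1 + 2*A 2 2 + 2*(2*A 1 2), by ring⟩)
  have d01 : k ∣ 4 * (2 * A 0 1) := by
    have h := dvd_sub (dvd_sub d12 d1) d2
    have e : 4 * A 0 0 + 4 * A 1 1 + 4 * (2 * A 0 1) - 4 * A 0 0 - 4 * A 1 1
        = 4 * (2 * A 0 1) := by ring
    rwa [e] at h
  have d02 : k ∣ 4 * (2 * A 0 2) := by
    have h := dvd_sub (dvd_sub d13 d1) d3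
    have e : 4 * A 0 0 + 4 * A 2 2 + 4 * (2 * A 0 2) - 4 * A 0 0 - 4 * A 2 2
        = 4 * (2 * A 0 2) := by ring
    rwa [e] at h
  have d12' : k ∣ 4 * (2 * A 1 2) := by
    have h := dvd_sub (dvd_sub d23 d2) d3
    have e : 4 * A 1 1 + 4 * A 2 2 + 4 * (2 * A 1 2) - 4 * A 1 1 - 4 * A 2 2
        = 4 * (2 * A 1 2) := by ring
    rwa [e] at h
  -- k ∣ 4
  have hk4 : k ∣ 4 := by
    have g5 := gcd_step d02 d12'
    have g4 := gcd_step d01 g5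
    have g3 := gcd_step d3 g4
    have g2 := gcd_step d2 g3
    have g1 := gcd_step d1 g2
    rw [hprim] at g1
    simpa using g1
  -- basis coordinates of the doubled standard vectors
  obtain ⟨b0, hb0, -⟩ := hbasis ![2,0,0] he1
  obtain ⟨b1, hb1, -⟩ := hbasis ![0,2,0] he2
  obtain ⟨b2, hb2, -⟩ := hbasis ![0,0,2] he3
  constructor
  · -- even-regular → regular
    intro hER n hn hloc
    have hkn : 0 < k * n := mul_pos hk hn
    have hkneven : Even (k * n) := by
      obtain ⟨t, ht⟩ := h2k; exact ⟨t * n, by rw [ht]; ring⟩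
    obtain ⟨x, hx⟩ := hER (k * n) hkn hkneven (fun p hp => by
      letI : Fact p.Prime := ⟨hp⟩
      obtain ⟨y, hy⟩ := hloc p hp
      exact ⟨_, by rw [hy]; push_cast; ring⟩)
    have h2x : 2 ∣ fInt A x := by
      rw [hx]
      obtain ⟨t, ht⟩ := h2k; exact ⟨t * n, by rw [ht]; ring⟩
    obtain ⟨c, hc, -⟩ := hbasis x h2x
    exact ⟨c, by rw [hc, hx]⟩
  · -- regular → even-regular
    intro hRG n hn hneven hloc
    haveI : Fact (Nat.Prime 2) := ⟨Nat.prime_two⟩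
    obtain ⟨x, hx⟩ := hloc 2 Nat.prime_two
    set x' : Fin 3 → ℤ := fun i => ((x i).appr 1 : ℤ) with hx'def
    have hz : ∀ i, ∃ z : ℤ_[2], x i = ((x' i : ℤ) : ℤ_[2]) + 2 * z := by
      intro i
      have h := PadicInt.appr_spec 1 (x i)
      rw [Ideal.mem_span_singleton] at h
      obtain ⟨z, hz⟩ := h
      refine ⟨z, ?_⟩
      have : ((x' i : ℤ) : ℤ_[2]) = (((x i).appr 1 : ℕ) : ℤ_[2]) := by
        simp [hx'def]
      rw [this]
      have hz' : x i - ((x i).appr 1 : ℤ_[2]) = 2 * z := by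
        rw [hz]; push_cast; ring
      linear_combination hz'
    choose z hzeq using hz
    obtain ⟨C, hC⟩ := decomp 2 A hA x' z
    have hxx : (fun i => ((x' i : ℤ) : ℤ_[2]) + 2 * z i) = x := funext fun i => (hzeq i).symm
    rw [hxx, hx] at hC
    -- 4 ∣ n - fInt A x'
    have h4dvd : (4 : ℤ) ∣ n - fInt A x' := by
      apply four_dvd_of_padic
      refine ⟨C, ?_⟩
      push_cast
      linear_combination hC
    have h2n : (2 : ℤ) ∣ n := hneven.two_dvd
    have h2fx' : (2 : ℤ) ∣ fInt A x' := by
      have h2' : (2 : ℤ) ∣ n - fInt A x' := dvd_trans ⟨2, by norm_num⟩ h4dvd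
      omega
    have hkfx' : k ∣ fInt A x' := hkdvd x' h2fx'
    have hkn : k ∣ n := by
      have h := dvd_add (dvd_trans hk4 h4dvd) hkfx'
      rwa [sub_add_cancel] at h
    obtain ⟨m, hm⟩ := hkn
    have hmpos : 0 < m := by nlinarith
    obtain ⟨c, hc, -⟩ := hbasis x' h2fx'
    have hmain := hRG m hmpos (fun p hp => by
      letI : Fact p.Prime := ⟨hp⟩
      by_cases hp2 : p = 2
      · subst hp2
        refine ⟨fun i => ((c i : ℤ) : ℤ_[2]) + z 0 * ((b0 i : ℤ) : ℤ_[2])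
            + z 1 * ((b1 i : ℤ) : ℤ_[2]) + z 2 * ((b2 i : ℤ) : ℤ_[2]), ?_⟩
        have hclaim : (fun j => ∑ i, (((c i : ℤ) : ℤ_[2]) + z 0 * ((b0 i : ℤ) : ℤ_[2])
            + z 1 * ((b1 i : ℤ) : ℤ_[2]) + z 2 * ((b2 i : ℤ) : ℤ_[2])) * ((v i j : ℤ) : ℤ_[2]))
            = x := by
          funext j
          have hcj : (c 0 * v 0 j + c 1 * v 1 j + c 2 * v 2 j : ℤ) = x' j := by
            have h := congrFun hc j; simpa [Fin.sum_univ_three] using h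
          have hb0j : (b0 0 * v 0 j + b0 1 * v 1 j + b0 2 * v 2 j : ℤ) = ![2,0,0] j := by
            have h := congrFun hb0 j; simpa [Fin.sum_univ_three] using h
          have hb1j : (b1 0 * v 0 j + b1 1 * v 1 j + b1 2 * v 2 j : ℤ) = ![0,2,0] j := by
            have h := congrFun hb1 j; simpa [Fin.sum_univ_three] using h
          have hb2j : (b2 0 * v 0 j + b2 1 * v 1 j + b2 2 * v 2 j : ℤ) = ![0,0,2] j := by
            have h := congrFun hb2 j; simpa [Fin.sum_univ_three] using h
          have Hc := congrArg (Int.cast : ℤ → ℤ_[2]) hcj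
          have Hb0 := congrArg (Int.cast : ℤ → ℤ_[2]) hb0j
          have Hb1 := congrArg (Int.cast : ℤ → ℤ_[2]) hb1j
          have Hb2 := congrArg (Int.cast : ℤ → ℤ_[2]) hb2j
          push_cast at Hc Hb0 Hb1 Hb2
          have hE : z 0 * ((![2,0,0] j : ℤ) : ℤ_[2]) + z 1 * ((![0,2,0] j : ℤ) : ℤ_[2])
              + z 2 * ((![0,0,2] j : ℤ) : ℤ_[2]) = 2 * z j := by
            fin_cases j <;> simp <;> ring
          simp only [Fin.sum_univ_three]
          rw [hzeq j]
          linear_combination Hc + z 0 * Hb0 + z 1 * Hb1 + z 2 * Hb2 + hE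
        rw [hclaim, hx, hm]
        push_cast
        ring
      · -- p odd
        obtain ⟨xp, hxp⟩ := hloc p hp
        have hunit : IsUnit (2 : ℤ_[p]) := by
          rw [PadicInt.isUnit_iff]
          rcases lt_or_eq_of_le (PadicInt.norm_le_one (2 : ℤ_[p])) with hlt | heq
          · exfalso
            have h2 : ((2 : ℤ) : ℤ_[p]) = (2 : ℤ_[p]) := by push_cast; ring
            rw [← h2] at hlt
            have hd := (PadicInt.norm_int_lt_one_iff_dvd (p := p) 2).mp hlt
            have : (p : ℕ) ∣ 2 := by exact_mod_cast hd
            exact hp2 ((Nat.prime_dvd_prime_iff_eq hp Nat.prime_two).mp this)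
          · exact heq
        obtain ⟨u, hu⟩ := isUnit_iff_exists_inv.mp hunit
        refine ⟨fun i => u * xp 0 * ((b0 i : ℤ) : ℤ_[p]) + u * xp 1 * ((b1 i : ℤ) : ℤ_[p])
            + u * xp 2 * ((b2 i : ℤ) : ℤ_[p]), ?_⟩
        have hclaim : (fun j => ∑ i, (u * xp 0 * ((b0 i : ℤ) : ℤ_[p])
            + u * xp 1 * ((b1 i : ℤ) : ℤ_[p]) + u * xp 2 * ((b2 i : ℤ) : ℤ_[p]))
            * ((v i j : ℤ) : ℤ_[p])) = xp := by
          funext j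
          have hb0j : (b0 0 * v 0 j + b0 1 * v 1 j + b0 2 * v 2 j : ℤ) = ![2,0,0] j := by
            have h := congrFun hb0 j; simpa [Fin.sum_univ_three] using h
          have hb1j : (b1 0 * v 0 j + b1 1 * v 1 j + b1 2 * v 2 j : ℤ) = ![0,2,0] j := by
            have h := congrFun hb1 j; simpa [Fin.sum_univ_three] using h
          have hb2j : (b2 0 * v 0 j + b2 1 * v 1 j + b2 2 * v 2 j : ℤ) = ![0,0,2] j := by
            have h := congrFun hb2 j; simpa [Fin.sum_univ_three] using h
          have Hb0 := congrArg (Int.cast : ℤ → ℤ_[p]) hb0j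
          have Hb1 := congrArg (Int.cast : ℤ → ℤ_[p]) hb1j
          have Hb2 := congrArg (Int.cast : ℤ → ℤ_[p]) hb2j
          push_cast at Hb0 Hb1 Hb2
          have hE : u * xp 0 * ((![2,0,0] j : ℤ) : ℤ_[p]) + u * xp 1 * ((![0,2,0] j : ℤ) : ℤ_[p])
              + u * xp 2 * ((![0,0,2] j : ℤ) : ℤ_[p]) = xp j := by
            fin_cases j
            · simp; linear_combination xp 0 * hu
            · simp; linear_combination xp 1 * hu
            · simp; linear_combination xp 2 * hu
          simp only [Fin.sum_univ_three]
          linear_combination (u * xp 0) * Hb0 + (u * xp 1) * Hb1 + (u * xp 2) * Hb2 + hE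
        rw [hclaim, hxp, hm]
        push_cast
        ring)
    obtain ⟨y, hy⟩ := hmain
    exact ⟨fun j => ∑ i, y i * v i j, by rw [hm]; exact hy⟩
end

section
/- Every integer n with n ≡ 5 (mod 6) that is represented over ℤ by the ternary quadratic form 8x²+9y²+20z²+8xz is represented over ℤ by the ternary quadratic form x²+y²+36z². -/
lemma strip36 : ∀ N : ℕ, ∀ y z : ℤ, y.natAbs ≤ N → y ≠ 0 →
    ∃ a b : ℤ, a ^ 2 + 2 * b ^ 2 = y ^ 2 + 2 * z ^ 2 ∧ ¬((3:ℤ) ∣ a ∧ (3:ℤ) ∣ b) ∧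
      a % 2 = y % 2 ∧ b % 2 = z % 2 := by
  intro N
  induction N with
  | zero => intro y z hN hy; exfalso; omega
  | succ N ih =>
    intro y z hN hy
    by_cases hd : (3:ℤ) ∣ y ∧ (3:ℤ) ∣ z
    · obtain ⟨⟨Y, hY⟩, ⟨Z, hZ⟩⟩ := hd
      have hY0 : Y ≠ 0 := by omega
      have hYN : Y.natAbs ≤ N := by omega
      obtain ⟨a, b, hab, hg, hpa, hpb⟩ := ih Y Z hYN hY0
      by_cases h3 : (3:ℤ) ∣ (a + b)
      · refine ⟨a - 4*b, 2*a + b, ?_, by omega, by omega, by omega⟩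
        linear_combination 9*hab - (y + 3*Y)*hY - 2*(z + 3*Z)*hZ
      · refine ⟨a + 4*b, 2*a - b, ?_, by omega, by omega, by omega⟩
        linear_combination 9*hab - (y + 3*Y)*hY - 2*(z + 3*Z)*hZ
    · exact ⟨y, z, by ring, hd, rfl, rfl⟩

theorem stmt6 (n : ℤ) (hn : n % 6 = 5)
    (h : ∃ x y z : ℤ, 8 * x ^ 2 + 9 * y ^ 2 + 20 * z ^ 2 + 8 * x * z = n) :
    ∃ x y z : ℤ, x ^ 2 + y ^ 2 + 36 * z ^ 2 = n := by
  obtain ⟨x, y, z, hf⟩ := h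
  have hy1 : y % 2 = 1 := by
    rcases (by omega : y % 2 = 0 ∨ y % 2 = 1) with h0 | h1
    · exfalso
      obtain ⟨k, hky⟩ : ∃ k, y = 2 * k := ⟨y / 2, by omega⟩
      have h2 : n = 2 * (4*x^2 + 18*k^2 + 10*z^2 + 4*x*z) := by
        linear_combination -hf + 9*(y + 2*k)*hky
      omega
    · exact h1
  have hy0 : y ≠ 0 := by omega
  obtain ⟨a, b, hab, hg, hpa, hpb⟩ := strip36 y.natAbs y z le_rfl hy0
  have heq : 2*(2*x+z)^2 + 9*a^2 + 18*b^2 = n := by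
    linear_combination hf + 9*hab
  have hu3 : ¬ (3:ℤ) ∣ (2*x+z) := by
    rintro ⟨k, hk⟩
    have h3n : (3:ℤ) ∣ n := ⟨6*k^2 + 3*a^2 + 6*b^2, by
      linear_combination -heq + 2*(2*x+z+3*k)*hk⟩
    omega
  have hdisj : (6:ℤ) ∣ (2*x+z+2*a+b) ∨ (6:ℤ) ∣ (2*x+z-2*a+b) ∨
      (6:ℤ) ∣ (2*x+z+2*a-b) ∨ (6:ℤ) ∣ (2*x+z-2*a-b) := by
    have h1 : (2*x+z) % 3 = 1 ∨ (2*x+z) % 3 = 2 := by omega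
    have h2 : a % 3 = 0 ∨ a % 3 = 1 ∨ a % 3 = 2 := by omega
    have h3 : b % 3 = 0 ∨ b % 3 = 1 ∨ b % 3 = 2 := by omega
    have h4 : ¬(a % 3 = 0 ∧ b % 3 = 0) := by omega
    rcases h1 with h1 | h1 <;> rcases h2 with h2 | h2 | h2 <;>
      rcases h3 with h3 | h3 | h3 <;> omega
  rcases hdisj with ⟨k, hk⟩ | ⟨k, hk⟩ | ⟨k, hk⟩ | ⟨k, hk⟩
  · exact ⟨a - 4*b, 2*a + b - (2*x+z), k, by
      linear_combination heq - (2*x+z+2*a+b+6*k)*hk⟩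
  · exact ⟨a + 4*b, 2*x+z+2*a-b, k, by
      linear_combination heq - (2*x+z-2*a+b+6*k)*hk⟩
  · exact ⟨a + 4*b, 2*x+z-2*a+b, k, by
      linear_combination heq - (2*x+z+2*a-b+6*k)*hk⟩
  · exact ⟨a - 4*b, 2*x+z+2*a+b, k, by
      linear_combination heq - (2*x+z-2*a-b+6*k)*hk⟩
end

section
/- Every integer n with n ≡ 1 (mod 4) that is represented over ℤ by the ternary quadratic form 2x²+3y²+18z² is represented over ℤ by the ternary quadratic form 2x²+3y²+72z². -/
private lemma sqOdd (t : ℤ) (h : t % 2 = 1) : t ^ 2 % 8 = 1 := by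
  obtain ⟨u, rfl⟩ : ∃ u, t = 2 * u + 1 := ⟨(t - 1) / 2, by omega⟩
  have h2 : (2 * u + 1) ^ 2 = 4 * (u * (u + 1)) + 1 := by ring
  obtain ⟨v, hv⟩ := Int.even_mul_succ_self u
  rw [h2, hv]
  omega

private lemma sqEven (t : ℤ) (h : t % 2 = 0) : t ^ 2 % 4 = 0 := by
  obtain ⟨u, rfl⟩ : ∃ u, t = 2 * u := ⟨t / 2, by omega⟩
  have h2 : (2 * u) ^ 2 = 4 * (u * u) := by ring
  rw [h2]
  exact Int.mul_emod_right 4 (u * u)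

private lemma keyAux (n : ℤ) : ∀ (j : ℕ) (x y z : ℤ),
    2 * x ^ 2 + 3 * y ^ 2 + 18 * z ^ 2 = n → x % 2 = 0 → ¬((2 : ℤ) ^ j ∣ x) →
    y % 2 = 1 → z % 2 = 1 → (4 : ℤ) ∣ (x - y + z) →
    ∃ a b c : ℤ, 2 * a ^ 2 + 3 * b ^ 2 + 72 * c ^ 2 = n := by
  intro j
  induction j with
  | zero =>
    intro x y z _ _ hxj _ _ _
    simp at hxj
  | succ j ih =>
    intro x y z h hx2 hxj hy hz h4
    obtain ⟨k, hk⟩ := h4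
    obtain ⟨m, hm⟩ : ∃ m, y = z + 2 * m := ⟨(y - z) / 2, by omega⟩
    subst hm
    have hx4 : x = 4 * k + 2 * m := by omega
    subst hx4
    rcases Int.even_or_odd k with ⟨c, hc⟩ | ⟨c, hc⟩
    · have hk2 : k = 2 * c := by omega
      subst hk2
      exact ⟨2 * c + 2 * m + 3 * z, 4 * c + 2 * m - z, c, by linear_combination h⟩
    · rcases Int.even_or_odd (k + m) with ⟨d, hd⟩ | ⟨d, hd⟩
      · have hm2 : m = 2 * d - k := by omega
        subst hm2
        exact ⟨k - (2 * d - k) - 3 * z, 2 * k + z, d, by linear_combination h⟩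
      · obtain ⟨e, he⟩ : ∃ e, m = 2 * e := ⟨m / 2, by omega⟩
        subst he
        by_cases hdiv : (2 : ℤ) ^ j ∣ (k + 4 * e + 3 * z)
        · have h2 : ¬ (2 : ℤ) ^ j ∣ (k - 2 * e - 3 * z) := by
            intro hX2
            apply hxj
            obtain ⟨t, ht⟩ := dvd_add hdiv hX2
            exact ⟨t, by rw [pow_succ]; linear_combination 2 * ht⟩
          exact ih (k - 2 * e - 3 * z) (2 * k + z) (k + 2 * e)
            (by linear_combination h) (by omega) h2 (by omega) (by omega) ⟨-z, by ring⟩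
        · exact ih (k + 4 * e + 3 * z) (2 * k + 4 * e - z) k
            (by linear_combination h) (by omega) hdiv (by omega) (by omega) ⟨z, by ring⟩

private lemma solveNonzero (n x y z : ℤ) (h : 2 * x ^ 2 + 3 * y ^ 2 + 18 * z ^ 2 = n)
    (hx0 : x ≠ 0) (hx2 : x % 2 = 0) (hy : y % 2 = 1) (hz : z % 2 = 1)
    (h4 : (4 : ℤ) ∣ (x - y + z)) :
    ∃ a b c : ℤ, 2 * a ^ 2 + 3 * b ^ 2 + 72 * c ^ 2 = n := by
  apply keyAux n x.natAbs x y z h hx2 ?_ hy hz h4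
  intro hdvd
  have h1 : (2 : ℤ) ^ x.natAbs ≤ |x| := Int.le_of_dvd (abs_pos.mpr hx0) ((dvd_abs _ _).mpr hdvd)
  have h2 : |x| < 2 ^ x.natAbs := by
    rw [Int.abs_eq_natAbs]
    exact_mod_cast Nat.lt_two_pow_self (n := x.natAbs)
  exact absurd h1 (not_le.mpr h2)

private lemma solveZero (n y z : ℤ) (h : 3 * y ^ 2 + 18 * z ^ 2 = n)
    (hy : y % 2 = 1) (hz : z % 2 = 1) (h4 : (4 : ℤ) ∣ (z - y)) :
    ∃ a b c : ℤ, 2 * a ^ 2 + 3 * b ^ 2 + 72 * c ^ 2 = n := by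
  obtain ⟨k, hk⟩ := h4
  have hy4 : y = z - 4 * k := by omega
  subst hy4
  rcases Int.even_or_odd k with ⟨c, hc⟩ | ⟨c, hc⟩
  · have hk2 : k = 2 * c := by omega
    subst hk2
    exact ⟨3 * z - 6 * c, 4 * c + z, c, by linear_combination h⟩
  · by_cases hzk : z = k
    · subst hzk
      exact ⟨3 * z, 3 * z, 0, by linear_combination h⟩
    · exact solveNonzero n (3 * z - 3 * k) (2 * k + (z - 4 * k) - 2 * z) k
        (by linear_combination h) (by omega) (by omega) (by omega) (by omega) ⟨z, by ring⟩

theorem stmt7 (n : ℤ) (hn : n % 4 = 1)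
    (h : ∃ x y z : ℤ, 2 * x ^ 2 + 3 * y ^ 2 + 18 * z ^ 2 = n) :
    ∃ x y z : ℤ, 2 * x ^ 2 + 3 * y ^ 2 + 72 * z ^ 2 = n := by
  obtain ⟨x, y, z, h⟩ := h
  rcases Int.emod_two_eq z with hz1 | hz1
  · obtain ⟨c, rfl⟩ : ∃ c, z = 2 * c := ⟨z / 2, by omega⟩
    exact ⟨x, y, c, by linear_combination h⟩
  · -- z odd: derive x even, y odd
    have hR := sqOdd z hz1
    have hxy : x % 2 = 0 ∧ y % 2 = 1 := by
      rcases Int.emod_two_eq x with hx1 | hx1 <;> rcases Int.emod_two_eq y with hy1 | hy1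
      · exfalso
        have hP := sqEven x hx1
        have hQ := sqEven y hy1
        obtain ⟨P, hPe⟩ : ∃ P, P = x ^ 2 := ⟨_, rfl⟩
        obtain ⟨Q, hQe⟩ : ∃ Q, Q = y ^ 2 := ⟨_, rfl⟩
        obtain ⟨R, hRe⟩ : ∃ R, R = z ^ 2 := ⟨_, rfl⟩
        rw [← hPe] at h hP
        rw [← hQe] at h hQ
        rw [← hRe] at h hR
        omega
      · exact ⟨hx1, hy1⟩
      · exfalso
        have hP := sqOdd x hx1
        have hQ := sqEven y hy1
        obtain ⟨P, hPe⟩ : ∃ P, P = x ^ 2 := ⟨_, rfl⟩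
        obtain ⟨Q, hQe⟩ : ∃ Q, Q = y ^ 2 := ⟨_, rfl⟩
        obtain ⟨R, hRe⟩ : ∃ R, R = z ^ 2 := ⟨_, rfl⟩
        rw [← hPe] at h hP
        rw [← hQe] at h hQ
        rw [← hRe] at h hR
        omega
      · exfalso
        have hP := sqOdd x hx1
        have hQ := sqOdd y hy1
        obtain ⟨P, hPe⟩ : ∃ P, P = x ^ 2 := ⟨_, rfl⟩
        obtain ⟨Q, hQe⟩ : ∃ Q, Q = y ^ 2 := ⟨_, rfl⟩
        obtain ⟨R, hRe⟩ : ∃ R, R = z ^ 2 := ⟨_, rfl⟩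
        rw [← hPe] at h hP
        rw [← hQe] at h hQ
        rw [← hRe] at h hR
        omega
    obtain ⟨hx1, hy1⟩ := hxy
    have hor : (4 : ℤ) ∣ (x - y + z) ∨ (4 : ℤ) ∣ (x - y - z) := by omega
    by_cases hx0 : x = 0
    · subst hx0
      rcases hor with h4 | h4
      · exact solveZero n y z (by linear_combination h) hy1 hz1 (by omega)
      · exact solveZero n y (-z) (by linear_combination h) hy1 (by omega) (by omega)
    · rcases hor with h4 | h4
      · exact solveNonzero n x y z h hx0 hx1 hy1 hz1 h4
      · exact solveNonzero n x y (-z) (by linear_combination h) hx0 hx1 hy1 (by omega)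
          (by omega)
end

section
/- Let a ≤ b be positive integers with gcd(a,b) = 1 and let η ∈ {1,3,5,7}. The diagonal binary quadratic form ax²+by² is P(8,η)-universal (represents over ℤ every prime of the form 8n+η, n ≥ 0) if and only if one of the following holds: η = 1 and (a,b) ∈ {(1,1),(1,2),(1,4),(1,8),(1,16)}; η = 3 and (a,b) = (1,2); η = 5 and (a,b) ∈ {(1,1),(1,4)}. In particular, no diagonal binary quadratic form is P(8,7)-universal. -/
set_option synthInstance.maxSize 4000


/-- The diagonal binary form `a x² + b y²` represents every prime congruent to `η` mod `8`. -/
def P8Univ (η : ℕ) (a b : ℤ) : Prop :=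
  ∀ q : ℕ, q.Prime → q % 8 = η → ∃ x y : ℤ, a * x ^ 2 + b * y ^ 2 = (q : ℤ)

/-- Bounded representation over `ℕ`. -/
def BRep (A B q : ℕ) : Prop :=
  ∃ X ≤ 9, ∃ Y ≤ 9, A * X ^ 2 + B * Y ^ 2 = q

instance (A B q : ℕ) : Decidable (BRep A B q) :=
  inferInstanceAs (Decidable (∃ X ≤ 9, ∃ Y ≤ 9, A * X ^ 2 + B * Y ^ 2 = q))

lemma natify {A B q : ℕ} {x y : ℤ} (h : (A : ℤ) * x ^ 2 + (B : ℤ) * y ^ 2 = q) :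
    A * x.natAbs ^ 2 + B * y.natAbs ^ 2 = q := by
  have : ((A * x.natAbs ^ 2 + B * y.natAbs ^ 2 : ℕ) : ℤ) = ((q : ℕ) : ℤ) := by
    push_cast
    rw [sq_abs, sq_abs]
    exact h
  exact_mod_cast this

lemma key {A B q : ℕ} (hA : 0 < A) (hAB : A ≤ B) (hq : 0 < q) (h99 : q ≤ 99) {x y : ℤ}
    (h : (A : ℤ) * x ^ 2 + (B : ℤ) * y ^ 2 = q) :
    BRep A B q ∧ ((∃ X ≤ q, A ≤ q ∧ A * X ^ 2 = q) ∨ B ≤ q) := by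
  have hn : A * x.natAbs ^ 2 + B * y.natAbs ^ 2 = q := natify h
  set X := x.natAbs with hXd
  set Y := y.natAbs with hYd
  have hB : 0 < B := lt_of_lt_of_le hA hAB
  have hX2 : X ^ 2 ≤ q := by nlinarith [Nat.zero_le (B * Y ^ 2)]
  have hY2 : Y ^ 2 ≤ q := by nlinarith [Nat.zero_le (A * X ^ 2)]
  have hX9 : X ≤ 9 := by
    by_contra hc
    push_neg at hc
    nlinarith
  have hY9 : Y ≤ 9 := by
    by_contra hc
    push_neg at hc
    nlinarith
  constructor
  · exact ⟨X, hX9, Y, hY9, hn⟩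
  · rcases Nat.eq_zero_or_pos Y with h0 | h0
    · left
      rw [h0] at hn
      have hn' : A * X ^ 2 = q := by simpa using hn
      have hX1 : 0 < X := by
        rcases Nat.eq_zero_or_pos X with h1 | h1
        · rw [h1] at hn'; simp at hn'; omega
        · exact h1
      refine ⟨X, ?_, ?_, hn'⟩
      · calc X ≤ X ^ 2 := Nat.le_self_pow two_ne_zero X
          _ ≤ q := hX2
      · calc A = A * 1 := (Nat.mul_one A).symm
          _ ≤ A * X ^ 2 := Nat.mul_le_mul_left A (by nlinarith)
          _ = q := hn'
    · right
      calc B = B * 1 := (Nat.mul_one B).symm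
        _ ≤ B * Y ^ 2 := Nat.mul_le_mul_left B (by nlinarith)
        _ ≤ q := by nlinarith [Nat.zero_le (A * X ^ 2)]

/-- Thue's lemma. -/
lemma thue {p : ℕ} (hp : p.Prime) (s : ZMod p) :
    ∃ x y : ℤ, ((x : ZMod p) = s * (y : ZMod p)) ∧ x.natAbs ≤ Nat.sqrt p ∧
      y.natAbs ≤ Nat.sqrt p ∧ ¬(x = 0 ∧ y = 0) := by
  haveI : Fact p.Prime := ⟨hp⟩
  set r := Nat.sqrt p with hr
  have hcard : Fintype.card (ZMod p) < Fintype.card (Fin (r + 1) × Fin (r + 1)) := by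
    rw [ZMod.card, Fintype.card_prod, Fintype.card_fin]
    exact Nat.lt_succ_sqrt p
  obtain ⟨u, v, huv, heq⟩ := Fintype.exists_ne_map_eq_of_card_lt
    (fun ab : Fin (r + 1) × Fin (r + 1) =>
      ((ab.1 : ℕ) : ZMod p) - s * ((ab.2 : ℕ) : ZMod p)) hcard
  have h1 : (u.1 : ℕ) ≤ r := Nat.lt_succ_iff.mp u.1.isLt
  have h2 : (v.1 : ℕ) ≤ r := Nat.lt_succ_iff.mp v.1.isLt
  have h3 : (u.2 : ℕ) ≤ r := Nat.lt_succ_iff.mp u.2.isLt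
  have h4 : (v.2 : ℕ) ≤ r := Nat.lt_succ_iff.mp v.2.isLt
  refine ⟨((u.1 : ℕ) : ℤ) - ((v.1 : ℕ) : ℤ), ((u.2 : ℕ) : ℤ) - ((v.2 : ℕ) : ℤ), ?_, ?_, ?_, ?_⟩
  · push_cast
    have heq' : ((u.1 : ℕ) : ZMod p) - s * ((u.2 : ℕ) : ZMod p)
        = ((v.1 : ℕ) : ZMod p) - s * ((v.2 : ℕ) : ZMod p) := heq
    linear_combination heq'
  · omega
  · omega
  · rintro ⟨hx, hy⟩
    apply huv
    have e1 : (u.1 : ℕ) = (v.1 : ℕ) := by omega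
    have e2 : (u.2 : ℕ) = (v.2 : ℕ) := by omega
    rw [Prod.ext_iff]
    exact ⟨Fin.ext e1, Fin.ext e2⟩

lemma sqrt_sq_lt_prime {p : ℕ} (hp : p.Prime) : Nat.sqrt p * Nat.sqrt p < p := by
  rcases lt_or_eq_of_le (Nat.sqrt_le p) with h | h
  · exact h
  · exfalso
    rcases hp.eq_one_or_self_of_dvd (Nat.sqrt p) ⟨Nat.sqrt p, h.symm⟩ with h2 | h2
    · rw [h2] at h; simp at h; exact absurd h.symm (Nat.Prime.ne_one hp)
    · rw [h2] at h; nlinarith [hp.two_le]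

/-- A prime `p ≡ 1, 3 (mod 8)` is of the form `x² + 2 y²`. -/
lemma rep_x2_2y2 {p : ℕ} (hp : p.Prime) (h : p % 8 = 1 ∨ p % 8 = 3) :
    ∃ x y : ℕ, x ^ 2 + 2 * y ^ 2 = p := by
  haveI : Fact p.Prime := ⟨hp⟩
  have hp2 : p ≠ 2 := by rintro rfl; omega
  obtain ⟨s, hs⟩ := (ZMod.exists_sq_eq_neg_two_iff hp2).mpr h
  obtain ⟨x, y, hxy, hxr, hyr, hne⟩ := thue hp s
  set r := Nat.sqrt p with hr
  have hrr : r * r < p := sqrt_sq_lt_prime hp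
  have hrrz : ((r : ℤ)) * (r : ℤ) < (p : ℤ) := by exact_mod_cast hrr
  have hx1 : -(r : ℤ) ≤ x := by omega
  have hx1' : x ≤ (r : ℤ) := by omega
  have hy1 : -(r : ℤ) ≤ y := by omega
  have hy1' : y ≤ (r : ℤ) := by omega
  have hx2 : x ^ 2 < (p : ℤ) := by
    nlinarith [mul_nonneg (by linarith : (0:ℤ) ≤ (r:ℤ) - x) (by linarith : (0:ℤ) ≤ (r:ℤ) + x)]
  have hy2 : y ^ 2 < (p : ℤ) := by
    nlinarith [mul_nonneg (by linarith : (0:ℤ) ≤ (r:ℤ) - y) (by linarith : (0:ℤ) ≤ (r:ℤ) + y)]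
  have hdvd : (p : ℤ) ∣ x ^ 2 + 2 * y ^ 2 := by
    have h0 : ((x ^ 2 + 2 * y ^ 2 : ℤ) : ZMod p) = 0 := by
      push_cast
      rw [hxy]
      linear_combination ((y : ℤ) : ZMod p) ^ 2 * hs.symm
    exact (ZMod.intCast_zmod_eq_zero_iff_dvd _ p).mp h0
  obtain ⟨k, hk⟩ := hdvd
  have hpos : 0 < x ^ 2 + 2 * y ^ 2 := by
    rcases eq_or_ne x 0 with rfl | hx0
    · have hy0 : y ≠ 0 := by tauto
      have hyy : y ^ 2 ≠ 0 := pow_ne_zero 2 hy0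
      have : 0 < y ^ 2 := lt_of_le_of_ne (sq_nonneg y) (Ne.symm hyy)
      nlinarith
    · have hxx : x ^ 2 ≠ 0 := pow_ne_zero 2 hx0
      have : 0 < x ^ 2 := lt_of_le_of_ne (sq_nonneg x) (Ne.symm hxx)
      nlinarith [sq_nonneg y]
  have hppos : (0 : ℤ) < p := by exact_mod_cast hp.pos
  have hk1 : 0 < k := by
    by_contra hk0
    push_neg at hk0
    have : (p : ℤ) * k ≤ 0 := mul_nonpos_of_nonneg_of_nonpos hppos.le hk0
    linarith
  have hk3 : k < 3 := by
    by_contra h3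
    push_neg at h3
    have : (p : ℤ) * 3 ≤ (p : ℤ) * k := by nlinarith
    linarith
  interval_cases k
  · refine ⟨x.natAbs, y.natAbs, ?_⟩
    have h1 : ((1 : ℕ) : ℤ) * x ^ 2 + ((2 : ℕ) : ℤ) * y ^ 2 = (p : ℤ) := by push_cast; linarith
    have := natify h1
    simpa using this
  · have hxe : Even x := by
      have hev : Even (x ^ 2) := ⟨(p : ℤ) - y ^ 2, by linarith⟩
      exact (Int.even_pow.mp hev).1
    obtain ⟨x', rfl⟩ := hxe
    refine ⟨y.natAbs, x'.natAbs, ?_⟩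
    have h2 : 2 * (y ^ 2 + 2 * x' ^ 2) = 2 * (p : ℤ) := by linear_combination hk
    have heq : ((1 : ℕ) : ℤ) * y ^ 2 + ((2 : ℕ) : ℤ) * x' ^ 2 = (p : ℤ) := by
      have := mul_left_cancel₀ (two_ne_zero) h2
      push_cast
      linarith
    have := natify heq
    simpa using this

lemma rep2sq {q : ℕ} (hq : q.Prime) (h : q % 4 = 1) : ∃ x y : ℕ, x ^ 2 + y ^ 2 = q := by
  haveI : Fact q.Prime := ⟨hq⟩
  exact Nat.Prime.sq_add_sq (by omega)

lemma aux14 {q m y : ℕ} (h4 : q % 4 = 1) (hxy : (2 * m + 1) ^ 2 + y ^ 2 = q) :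
    ∃ u v : ℕ, u ^ 2 + 4 * v ^ 2 = q := by
  rcases Nat.even_or_odd y with ⟨n, rfl⟩ | ⟨n, rfl⟩
  · exact ⟨2 * m + 1, n, by rw [← hxy]; ring⟩
  · exfalso
    have e : q = 4 * (m ^ 2 + m + n ^ 2 + n) + 2 := by rw [← hxy]; ring
    generalize m ^ 2 + m + n ^ 2 + n = u at e
    omega

lemma rep14 {q : ℕ} (hq : q.Prime) (h : q % 4 = 1) : ∃ x y : ℕ, x ^ 2 + 4 * y ^ 2 = q := by
  obtain ⟨x, y, hxy⟩ := rep2sq hq h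
  rcases Nat.even_or_odd x with ⟨m, rfl⟩ | ⟨m, rfl⟩
  · rcases Nat.even_or_odd y with ⟨n, rfl⟩ | ⟨n, rfl⟩
    · exfalso
      have e : q = 4 * (m ^ 2 + n ^ 2) := by rw [← hxy]; ring
      generalize m ^ 2 + n ^ 2 = u at e
      omega
    · exact aux14 (m := n) (y := m + m) h (by rw [← hxy]; ring)
  · exact aux14 h hxy

lemma aux116 {q m y : ℕ} (h8 : q % 8 = 1) (hxy : (2 * m + 1) ^ 2 + y ^ 2 = q) :
    ∃ u v : ℕ, u ^ 2 + 16 * v ^ 2 = q := by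
  rcases Nat.even_or_odd y with ⟨n, rfl⟩ | ⟨n, rfl⟩
  · rcases Nat.even_or_odd n with ⟨c, rfl⟩ | ⟨c, rfl⟩
    · exact ⟨2 * m + 1, c, by rw [← hxy]; ring⟩
    · exfalso
      have e : q = 4 * (m * (m + 1)) + 16 * (c ^ 2 + c) + 5 := by rw [← hxy]; ring
      obtain ⟨t, ht⟩ := Nat.even_mul_succ_self m
      rw [ht] at e
      generalize c ^ 2 + c = u at e
      omega
  · exfalso
    have e : q = 4 * (m ^ 2 + m + n ^ 2 + n) + 2 := by rw [← hxy]; ring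
    generalize m ^ 2 + m + n ^ 2 + n = u at e
    omega

lemma rep116 {q : ℕ} (hq : q.Prime) (h : q % 8 = 1) : ∃ x y : ℕ, x ^ 2 + 16 * y ^ 2 = q := by
  obtain ⟨x, y, hxy⟩ := rep2sq hq (by omega)
  rcases Nat.even_or_odd x with ⟨m, rfl⟩ | ⟨m, rfl⟩
  · rcases Nat.even_or_odd y with ⟨n, rfl⟩ | ⟨n, rfl⟩
    · exfalso
      have e : q = 4 * (m ^ 2 + n ^ 2) := by rw [← hxy]; ring
      generalize m ^ 2 + n ^ 2 = u at e
      omega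
    · exact aux116 (m := n) (y := m + m) h (by rw [← hxy]; ring)
  · exact aux116 h hxy

lemma rep18 {q : ℕ} (hq : q.Prime) (h : q % 8 = 1) : ∃ x y : ℕ, x ^ 2 + 8 * y ^ 2 = q := by
  obtain ⟨x, y, hxy⟩ := rep_x2_2y2 hq (Or.inl h)
  rcases Nat.even_or_odd x with ⟨m, rfl⟩ | ⟨m, rfl⟩
  · exfalso
    have e : q = 2 * (2 * m ^ 2 + y ^ 2) := by rw [← hxy]; ring
    generalize 2 * m ^ 2 + y ^ 2 = u at e
    omega
  · rcases Nat.even_or_odd y with ⟨n, rfl⟩ | ⟨n, rfl⟩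
    · exact ⟨2 * m + 1, n, by rw [← hxy]; ring⟩
    · exfalso
      have e : q = 4 * (m * (m + 1)) + 8 * (n ^ 2 + n) + 3 := by rw [← hxy]; ring
      obtain ⟨t, ht⟩ := Nat.even_mul_succ_self m
      rw [ht] at e
      generalize n ^ 2 + n = u at e
      omega

theorem stmt8 (a b : ℤ) (ha : 0 < a) (hab : a ≤ b) (hcop : Int.gcd a b = 1)
    (η : ℕ) (hη : η = 1 ∨ η = 3 ∨ η = 5 ∨ η = 7) :
    P8Univ η a b ↔
      ((η = 1 ∧ ((a, b) = (1, 1) ∨ (a, b) = (1, 2) ∨ (a, b) = (1, 4) ∨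
          (a, b) = (1, 8) ∨ (a, b) = (1, 16))) ∨
       (η = 3 ∧ (a, b) = (1, 2)) ∨
       (η = 5 ∧ ((a, b) = (1, 1) ∨ (a, b) = (1, 4)))) := by
  constructor
  · intro hU
    lift a to ℕ using ha.le with A
    lift b to ℕ using (ha.trans_le hab).le with B
    have hA : 0 < A := by exact_mod_cast ha
    have hAB : A ≤ B := by exact_mod_cast hab
    rcases hη with rfl | rfl | rfl | rfl
    · -- η = 1
      obtain ⟨x1, y1, h1⟩ := hU 17 (by norm_num) (by norm_num)
      obtain ⟨r1, d1⟩ := key hA hAB (by norm_num) (by norm_num) h1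
      obtain ⟨x2, y2, h2⟩ := hU 41 (by norm_num) (by norm_num)
      obtain ⟨r2, d2⟩ := key hA hAB (by norm_num) (by norm_num) h2
      obtain ⟨x3, y3, h3⟩ := hU 73 (by norm_num) (by norm_num)
      obtain ⟨r3, _⟩ := key hA hAB (by norm_num) (by norm_num) h3
      rcases d1 with ⟨X, hXq, hAq, hAX⟩ | hB
      · exfalso
        have hA17 : A = 17 := by
          have dd : ∀ A ≤ 17, ∀ X ≤ 17, A * X ^ 2 = 17 → A = 17 := by decide
          exact dd A hAq X hXq hAX
        subst hA17
        have hB41 : B ≤ 41 := by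
          rcases d2 with ⟨X2, hX2, _, heq2⟩ | hh
          · have dd : ∀ X ≤ 41, 17 * X ^ 2 ≠ 41 := by decide
            exact absurd heq2 (dd X2 hX2)
          · exact hh
        have dd : ∀ B ≤ 41, 17 ≤ B → BRep 17 B 41 → BRep 17 B 73 → False := by decide
        exact dd B hB41 hAB r2 r3
      · left
        refine ⟨rfl, ?_⟩
        have hA17 : A ≤ 17 := le_trans hAB hB
        have dd : ∀ A ≤ 17, ∀ B ≤ 17, 0 < A → A ≤ B → BRep A B 17 → BRep A B 41 →
            BRep A B 73 → (A = 1 ∧ (B = 1 ∨ B = 2 ∨ B = 4 ∨ B = 8 ∨ B = 16)) := by decide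
        obtain ⟨rfl, hBv⟩ := dd A hA17 B hB hA hAB r1 r2 r3
        rcases hBv with rfl | rfl | rfl | rfl | rfl <;> norm_num [Prod.ext_iff]
    · -- η = 3
      obtain ⟨x1, y1, h1⟩ := hU 3 (by norm_num) (by norm_num)
      obtain ⟨r1, d1⟩ := key hA hAB (by norm_num) (by norm_num) h1
      obtain ⟨x2, y2, h2⟩ := hU 11 (by norm_num) (by norm_num)
      obtain ⟨r2, d2⟩ := key hA hAB (by norm_num) (by norm_num) h2
      obtain ⟨x3, y3, h3⟩ := hU 19 (by norm_num) (by norm_num)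
      obtain ⟨r3, _⟩ := key hA hAB (by norm_num) (by norm_num) h3
      rcases d1 with ⟨X, hXq, hAq, hAX⟩ | hB
      · exfalso
        have hA3 : A = 3 := by
          have dd : ∀ A ≤ 3, ∀ X ≤ 3, A * X ^ 2 = 3 → A = 3 := by decide
          exact dd A hAq X hXq hAX
        subst hA3
        have hB11 : B ≤ 11 := by
          rcases d2 with ⟨X2, hX2, _, heq2⟩ | hh
          · have dd : ∀ X ≤ 11, 3 * X ^ 2 ≠ 11 := by decide
            exact absurd heq2 (dd X2 hX2)
          · exact hh
        have dd : ∀ B ≤ 11, 3 ≤ B → BRep 3 B 11 → BRep 3 B 19 → False := by decide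
        exact dd B hB11 hAB r2 r3
      · right; left
        refine ⟨rfl, ?_⟩
        have hA3 : A ≤ 3 := le_trans hAB hB
        have dd : ∀ A ≤ 3, ∀ B ≤ 3, 0 < A → A ≤ B → BRep A B 3 → BRep A B 11 →
            BRep A B 19 → (A = 1 ∧ B = 2) := by decide
        obtain ⟨rfl, rfl⟩ := dd A hA3 B hB hA hAB r1 r2 r3
        norm_num [Prod.ext_iff]
    · -- η = 5
      obtain ⟨x1, y1, h1⟩ := hU 5 (by norm_num) (by norm_num)
      obtain ⟨r1, d1⟩ := key hA hAB (by norm_num) (by norm_num) h1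
      obtain ⟨x2, y2, h2⟩ := hU 13 (by norm_num) (by norm_num)
      obtain ⟨r2, d2⟩ := key hA hAB (by norm_num) (by norm_num) h2
      obtain ⟨x3, y3, h3⟩ := hU 29 (by norm_num) (by norm_num)
      obtain ⟨r3, _⟩ := key hA hAB (by norm_num) (by norm_num) h3
      rcases d1 with ⟨X, hXq, hAq, hAX⟩ | hB
      · exfalso
        have hA5 : A = 5 := by
          have dd : ∀ A ≤ 5, ∀ X ≤ 5, A * X ^ 2 = 5 → A = 5 := by decide
          exact dd A hAq X hXq hAX
        subst hA5
        have hB13 : B ≤ 13 := by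
          rcases d2 with ⟨X2, hX2, _, heq2⟩ | hh
          · have dd : ∀ X ≤ 13, 5 * X ^ 2 ≠ 13 := by decide
            exact absurd heq2 (dd X2 hX2)
          · exact hh
        have dd : ∀ B ≤ 13, 5 ≤ B → BRep 5 B 13 → BRep 5 B 29 → False := by decide
        exact dd B hB13 hAB r2 r3
      · right; right
        refine ⟨rfl, ?_⟩
        have hA5 : A ≤ 5 := le_trans hAB hB
        have dd : ∀ A ≤ 5, ∀ B ≤ 5, 0 < A → A ≤ B → BRep A B 5 → BRep A B 13 →
            BRep A B 29 → (A = 1 ∧ (B = 1 ∨ B = 4)) := by decide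
        obtain ⟨rfl, hBv⟩ := dd A hA5 B hB hA hAB r1 r2 r3
        rcases hBv with rfl | rfl <;> norm_num [Prod.ext_iff]
    · -- η = 7
      exfalso
      obtain ⟨x1, y1, h1⟩ := hU 7 (by norm_num) (by norm_num)
      obtain ⟨r1, d1⟩ := key hA hAB (by norm_num) (by norm_num) h1
      obtain ⟨x2, y2, h2⟩ := hU 23 (by norm_num) (by norm_num)
      obtain ⟨r2, d2⟩ := key hA hAB (by norm_num) (by norm_num) h2
      obtain ⟨x3, y3, h3⟩ := hU 31 (by norm_num) (by norm_num)
      obtain ⟨r3, _⟩ := key hA hAB (by norm_num) (by norm_num) h3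
      rcases d1 with ⟨X, hXq, hAq, hAX⟩ | hB
      · have hA7 : A = 7 := by
          have dd : ∀ A ≤ 7, ∀ X ≤ 7, A * X ^ 2 = 7 → A = 7 := by decide
          exact dd A hAq X hXq hAX
        subst hA7
        have hB23 : B ≤ 23 := by
          rcases d2 with ⟨X2, hX2, _, heq2⟩ | hh
          · have dd : ∀ X ≤ 23, 7 * X ^ 2 ≠ 23 := by decide
            exact absurd heq2 (dd X2 hX2)
          · exact hh
        have dd : ∀ B ≤ 23, 7 ≤ B → BRep 7 B 23 → BRep 7 B 31 → False := by decide
        exact dd B hB23 hAB r2 r3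
      · have hA7 : A ≤ 7 := le_trans hAB hB
        have dd : ∀ A ≤ 7, ∀ B ≤ 7, 0 < A → A ≤ B → BRep A B 7 → BRep A B 23 →
            BRep A B 31 → False := by decide
        exact dd A hA7 B hB hA hAB r1 r2 r3
  · rintro (⟨rfl, h⟩ | ⟨rfl, h⟩ | ⟨rfl, h⟩)
    · rcases h with h | h | h | h | h <;>
        (simp only [Prod.mk.injEq] at h; obtain ⟨rfl, rfl⟩ := h) <;>
        intro q hq hq8
      · obtain ⟨x, y, e⟩ := rep2sq hq (by omega)
        exact ⟨x, y, by rw [← e]; push_cast; ring⟩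
      · obtain ⟨x, y, e⟩ := rep_x2_2y2 hq (Or.inl hq8)
        exact ⟨x, y, by rw [← e]; push_cast; ring⟩
      · obtain ⟨x, y, e⟩ := rep14 hq (by omega)
        exact ⟨x, y, by rw [← e]; push_cast; ring⟩
      · obtain ⟨x, y, e⟩ := rep18 hq hq8
        exact ⟨x, y, by rw [← e]; push_cast; ring⟩
      · obtain ⟨x, y, e⟩ := rep116 hq hq8
        exact ⟨x, y, by rw [← e]; push_cast; ring⟩
    · simp only [Prod.mk.injEq] at h
      obtain ⟨rfl, rfl⟩ := h
      intro q hq hq8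
      obtain ⟨x, y, e⟩ := rep_x2_2y2 hq (Or.inr hq8)
      exact ⟨x, y, by rw [← e]; push_cast; ring⟩
    · rcases h with h | h <;>
        (simp only [Prod.mk.injEq] at h; obtain ⟨rfl, rfl⟩ := h) <;>
        intro q hq hq8
      · obtain ⟨x, y, e⟩ := rep2sq hq (by omega)
        exact ⟨x, y, by rw [← e]; push_cast; ring⟩
      · obtain ⟨x, y, e⟩ := rep14 hq (by omega)
        exact ⟨x, y, by rw [← e]; push_cast; ring⟩
end

section
/- Let q_k denote the k-th odd prime (q₁ = 3, q₂ = 5, q₃ = 7, …). Let N be a positive integer and δ ∈ {0,1,2,3}. Suppose w is an integer with w > max(4, 2δ) such that q_{2δ+1}·q_{2δ+2}⋯q_w > N·((w+1)·2^{w+1})^δ. If p₁ < p₂ < ⋯ < p_s are odd primes satisfying p₁p₂⋯p_s ≤ N·(p₁²·(s+1)·2^{s+1})^δ, then s ≤ w−1. -/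
/-- `nthOddPrime k` is the `k`-th odd prime (1-indexed): `nthOddPrime 1 = 3`,
`nthOddPrime 2 = 5`, `nthOddPrime 3 = 7`, … -/
noncomputable def nthOddPrime (k : ℕ) : ℕ :=
  Nat.nth (fun p => p.Prime ∧ p ≠ 2) (k - 1)

lemma oddset_infinite : {p : ℕ | p.Prime ∧ p ≠ 2}.Infinite := by
  have h : {p : ℕ | p.Prime ∧ p ≠ 2} = {p | p.Prime} \ {2} := by
    ext x; simp [Set.mem_diff]
  rw [h]
  exact Nat.infinite_setOf_prime.diff (Set.finite_singleton 2)

lemma nthOdd_mem (k : ℕ) : (nthOddPrime k).Prime ∧ nthOddPrime k ≠ 2 :=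
  Nat.nth_mem_of_infinite oddset_infinite _

lemma nthOdd_odd (k : ℕ) : Odd (nthOddPrime k) :=
  (nthOdd_mem k).1.odd_of_ne_two (nthOdd_mem k).2

lemma nthOdd_ge3 (k : ℕ) : 3 ≤ nthOddPrime k := by
  have h1 := (nthOdd_mem k).1.two_le
  have h2 := (nthOdd_mem k).2
  omega

lemma nthOdd_step (k : ℕ) (hk : 1 ≤ k) : nthOddPrime k + 2 ≤ nthOddPrime (k + 1) := by
  have hlt : nthOddPrime k < nthOddPrime (k + 1) := by
    unfold nthOddPrime
    rw [Nat.nth_lt_nth oddset_infinite]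
    omega
  obtain ⟨a, ha⟩ := nthOdd_odd k
  obtain ⟨b, hb⟩ := nthOdd_odd (k + 1)
  omega

lemma nthOdd4 : nthOddPrime 4 = 11 := by
  have h : (fun p : ℕ => p.Prime ∧ p ≠ 2) 11 := by norm_num
  have hc : Nat.count (fun p : ℕ => p.Prime ∧ p ≠ 2) 11 = 3 := by
    rw [Nat.count_eq_card_filter_range]
    decide
  have := Nat.nth_count (p := fun p : ℕ => p.Prime ∧ p ≠ 2) h
  rw [hc] at this
  exact this

lemma nthOdd_lower : ∀ k, 4 ≤ k → 2 * k + 3 ≤ nthOddPrime k := by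
  intro k hk
  induction k with
  | zero => omega
  | succ n ih =>
    rcases Nat.lt_or_ge n 4 with h | h
    · interval_cases n
      · omega
      · omega
      · omega
      · rw [nthOdd4]
    · have := nthOdd_step n (by omega)
      have := ih h
      omega

theorem stmt11 (N δ w : ℕ) (hN : 0 < N) (hδ : δ ≤ 3)
    (hw : max 4 (2 * δ) < w)
    (hprod : N * ((w + 1) * 2 ^ (w + 1)) ^ δ <
      ∏ i ∈ Finset.Icc (2 * δ + 1) w, nthOddPrime i)
    (s : ℕ) (hs : 1 ≤ s) (p : ℕ → ℕ)
    (hprime : ∀ i, 1 ≤ i → i ≤ s → (p i).Prime ∧ p i ≠ 2)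
    (hmono : ∀ i j, 1 ≤ i → i < j → j ≤ s → p i < p j)
    (hineq : ∏ i ∈ Finset.Icc 1 s, p i ≤ N * (p 1 ^ 2 * (s + 1) * 2 ^ (s + 1)) ^ δ) :
    s ≤ w - 1 := by
  by_contra hcon
  have hw4 : 4 < w := lt_of_le_of_lt (le_max_left _ _) hw
  have hwδ : 2 * δ < w := lt_of_le_of_lt (le_max_right _ _) hw
  have hws : w ≤ s := by omega
  -- p i ≥ nthOddPrime i
  have hpge : ∀ i, 1 ≤ i → i ≤ s → nthOddPrime i ≤ p i := by
    intro i hi1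
    induction i with
    | zero => omega
    | succ n ih =>
      intro hns
      rcases Nat.eq_or_lt_of_le hi1 with h1 | h1
      · -- n + 1 = 1, base case
        have hn0 : n = 0 := by omega
        subst hn0
        have hp := hprime 1 le_rfl hns
        have h3 : 3 ≤ p 1 := by
          have := hp.1.two_le; have := hp.2; omega
        calc nthOddPrime 1 = 3 := by
              unfold nthOddPrime
              have h : (fun p : ℕ => p.Prime ∧ p ≠ 2) 3 := by norm_num
              have hc : Nat.count (fun p : ℕ => p.Prime ∧ p ≠ 2) 3 = 0 := by
                rw [Nat.count_eq_card_filter_range]; decide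
              have := Nat.nth_count (p := fun p : ℕ => p.Prime ∧ p ≠ 2) h
              rw [hc] at this; simpa using this
          _ ≤ p 1 := h3
      · have hn1 : 1 ≤ n := by omega
        have ihn := ih hn1 (by omega)
        have hlt : p n < p (n + 1) := hmono n (n + 1) hn1 (by omega) hns
        have hmem : (fun q : ℕ => q.Prime ∧ q ≠ 2) (p (n + 1)) :=
          hprime (n + 1) (by omega) hns
        have hnth := Nat.nth_count (p := fun q : ℕ => q.Prime ∧ q ≠ 2) hmem
        have hlt2 : Nat.nth (fun q : ℕ => q.Prime ∧ q ≠ 2) (n - 1) <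
            Nat.nth (fun q : ℕ => q.Prime ∧ q ≠ 2)
              (Nat.count (fun q : ℕ => q.Prime ∧ q ≠ 2) (p (n + 1))) := by
          rw [hnth]
          exact lt_of_le_of_lt ihn hlt
        rw [Nat.nth_lt_nth oddset_infinite] at hlt2
        have hle : n ≤ Nat.count (fun q : ℕ => q.Prime ∧ q ≠ 2) (p (n + 1)) := by omega
        have := (Nat.nth_le_nth oddset_infinite).mpr hle
        rw [hnth] at this
        simpa [nthOddPrime] using this
  -- key arithmetic inequality
  have harith : ∀ t : ℕ, 5 ≤ t →
      ((t + 2) * 2 ^ (t + 2)) ^ δ ≤ (2 * t + 5) * ((t + 1) * 2 ^ (t + 1)) ^ δ := by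
    intro t ht
    have hpos : 0 < (t + 1) ^ δ := Nat.pow_pos (by omega)
    have key : (2 * (t + 2)) ^ δ ≤ (2 * t + 5) * (t + 1) ^ δ := by
      interval_cases δ <;> nlinarith [ht, sq_nonneg t, sq_nonneg (t + 1)]
    have heq : ((t + 2) * 2 ^ (t + 2)) ^ δ * (t + 1) ^ δ =
        (2 * (t + 2)) ^ δ * ((t + 1) * 2 ^ (t + 1)) ^ δ := by
      rw [← mul_pow, ← mul_pow]
      congr 1
      rw [pow_succ]
      ring
    have h2 : ((t + 2) * 2 ^ (t + 2)) ^ δ * (t + 1) ^ δ ≤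
        ((2 * t + 5) * ((t + 1) * 2 ^ (t + 1)) ^ δ) * (t + 1) ^ δ := by
      rw [heq]
      calc (2 * (t + 2)) ^ δ * ((t + 1) * 2 ^ (t + 1)) ^ δ
          ≤ ((2 * t + 5) * (t + 1) ^ δ) * ((t + 1) * 2 ^ (t + 1)) ^ δ :=
            Nat.mul_le_mul_right _ key
        _ = ((2 * t + 5) * ((t + 1) * 2 ^ (t + 1)) ^ δ) * (t + 1) ^ δ := by ring
    exact Nat.le_of_mul_le_mul_right h2 hpos
  -- Claim A by induction
  have claimA : ∀ t, w ≤ t → N * ((t + 1) * 2 ^ (t + 1)) ^ δ <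
      ∏ i ∈ Finset.Icc (2 * δ + 1) t, nthOddPrime i := by
    intro t ht
    induction t, ht using Nat.le_induction with
    | base => exact hprod
    | succ t ht ih =>
      have ht5 : 5 ≤ t := by omega
      rw [Finset.prod_Icc_succ_top (by omega : 2 * δ + 1 ≤ t + 1)]
      have hq : 2 * t + 5 ≤ nthOddPrime (t + 1) := by
        have := nthOdd_lower (t + 1) (by omega); omega
      calc N * ((t + 2) * 2 ^ (t + 2)) ^ δ
          ≤ N * ((2 * t + 5) * ((t + 1) * 2 ^ (t + 1)) ^ δ) :=
            Nat.mul_le_mul_left _ (harith t ht5)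
        _ = (2 * t + 5) * (N * ((t + 1) * 2 ^ (t + 1)) ^ δ) := by ring
        _ < (2 * t + 5) * ∏ i ∈ Finset.Icc (2 * δ + 1) t, nthOddPrime i := by
            exact (Nat.mul_lt_mul_left (by omega)).mpr ih
        _ ≤ (∏ i ∈ Finset.Icc (2 * δ + 1) t, nthOddPrime i) * nthOddPrime (t + 1) := by
            rw [mul_comm]
            exact Nat.mul_le_mul_left _ hq
  have hA := claimA s hws
  -- split the product
  have hsplit : (∏ i ∈ Finset.Icc 1 (2 * δ), p i) *
      (∏ i ∈ Finset.Icc (2 * δ + 1) s, p i) = ∏ i ∈ Finset.Icc 1 s, p i := by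
    have := Finset.prod_Ioc_consecutive p (show 0 ≤ 2 * δ by omega) (show 2 * δ ≤ s by omega)
    simpa [← Finset.Icc_add_one_left_eq_Ioc] using this
  -- lower bound pieces
  have hp1 : 3 ≤ p 1 := by
    have hp := hprime 1 le_rfl hs
    have := hp.1.two_le; have := hp.2; omega
  have hb1 : p 1 ^ (2 * δ) ≤ ∏ i ∈ Finset.Icc 1 (2 * δ), p i := by
    calc p 1 ^ (2 * δ) = ∏ i ∈ Finset.Icc 1 (2 * δ), p 1 := by
          rw [Finset.prod_const, Nat.card_Icc]; norm_num
      _ ≤ ∏ i ∈ Finset.Icc 1 (2 * δ), p i := by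
          apply Finset.prod_le_prod'
          intro i hi
          simp only [Finset.mem_Icc] at hi
          rcases Nat.eq_or_lt_of_le hi.1 with h | h
          · exact h ▸ le_rfl
          · exact le_of_lt (hmono 1 i le_rfl h (by omega))
  have hb2 : ∏ i ∈ Finset.Icc (2 * δ + 1) s, nthOddPrime i ≤
      ∏ i ∈ Finset.Icc (2 * δ + 1) s, p i := by
    apply Finset.prod_le_prod'
    intro i hi
    simp only [Finset.mem_Icc] at hi
    exact hpge i (by omega) hi.2
  have hfinal : N * (p 1 ^ 2 * (s + 1) * 2 ^ (s + 1)) ^ δ <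
      ∏ i ∈ Finset.Icc 1 s, p i := by
    calc N * (p 1 ^ 2 * (s + 1) * 2 ^ (s + 1)) ^ δ
        = N * ((p 1 ^ 2) ^ δ * ((s + 1) * 2 ^ (s + 1)) ^ δ) := by
          rw [mul_assoc, mul_pow]
      _ = p 1 ^ (2 * δ) * (N * ((s + 1) * 2 ^ (s + 1)) ^ δ) := by
          rw [← pow_mul]; ring
      _ < p 1 ^ (2 * δ) * ∏ i ∈ Finset.Icc (2 * δ + 1) s, nthOddPrime i := by
          exact (Nat.mul_lt_mul_left (Nat.pow_pos (by omega))).mpr hA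
      _ ≤ (∏ i ∈ Finset.Icc 1 (2 * δ), p i) * ∏ i ∈ Finset.Icc (2 * δ + 1) s, p i :=
          Nat.mul_le_mul hb1 hb2
      _ = ∏ i ∈ Finset.Icc 1 s, p i := hsplit
  omega
end
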